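/- Let (h, ·) be a left-symmetric algebra with left multiplications ℓ, right multiplications r, and adjoint maps ad. The left-symmetric product associated to the symplectic cotangent Lie algebra (h* ×_ℓ h, ω) is given by (α,x) ⊙ (β,y) = (-ad_x^t β + r_y^t α, x·y). -/

import Mathlib

open Module

/-- The Lie bracket of the cotangent Lie algebra `h* ×_ℓ h` of a left-symmetric
algebra `(h, mul)`: `[(α,x),(β,y)] = (ℓ_y^t α - ℓ_x^t β, [x,y])`. -/
def cotangentBracket {h : Type*} [AddCommGroup h] [Module ℝ h]
    (mul : h →ₗ[ℝ] h →ₗ[ℝ] h) :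
    (Dual ℝ h × h) → (Dual ℝ h × h) → (Dual ℝ h × h) :=
  fun u v =>
    ((mul v.2).dualMap u.1 - (mul u.2).dualMap v.1, mul u.2 v.2 - mul v.2 u.2)

/-- The symplectic form of the cotangent Lie algebra:
`ω((α,x),(β,y)) = β(x) - α(y)`. -/
def cotangentForm {h : Type*} [AddCommGroup h] [Module ℝ h] :
    (Dual ℝ h × h) → (Dual ℝ h × h) → ℝ :=
  fun u v => v.1 u.2 - u.1 v.2

theorem eq_of_cotangentForm_left_eq {h : Type*} [AddCommGroup h] [Module ℝ h]
    {u v : Dual ℝ h × h} (huv : ∀ w, cotangentForm u w = cotangentForm v w) : u = v := by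
  have hfst : u.1 = v.1 := by
    ext y
    simpa [cotangentForm] using huv (0, y)
  have hsnd : u.2 = v.2 := by
    rw [← sub_eq_zero, ← Module.forall_dual_apply_eq_zero_iff ℝ]
    intro δ
    simpa [cotangentForm, sub_eq_zero] using huv (δ, 0)
  exact Prod.ext hfst hsnd

/-- `(α,x) ⊙ (β,y) = (-ad_x^t β + r_y^t α, x·y)`. -/
def cotangentProduct {h : Type*} [AddCommGroup h] [Module ℝ h]
    (mul : h →ₗ[ℝ] h →ₗ[ℝ] h) (u v : Dual ℝ h × h) : Dual ℝ h × h :=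
  (-(mul u.2 - mul.flip u.2).dualMap v.1 + (mul.flip v.2).dualMap u.1, mul u.2 v.2)

theorem cotangentForm_cotangentProduct {h : Type*} [AddCommGroup h] [Module ℝ h]
    (mul : h →ₗ[ℝ] h →ₗ[ℝ] h) (u v w : Dual ℝ h × h) :
    cotangentForm (cotangentProduct mul u v) w
      = -cotangentForm v (cotangentBracket mul u w) := by
  simp only [cotangentForm, cotangentProduct, cotangentBracket, LinearMap.dualMap_apply,
    LinearMap.add_apply, LinearMap.neg_apply, LinearMap.sub_apply, LinearMap.flip_apply,
    map_sub]
  ring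

theorem snla_stmt_11_general (h : Type*) [AddCommGroup h] [Module ℝ h]
    (mul : h →ₗ[ℝ] h →ₗ[ℝ] h)
    (p : (Dual ℝ h × h) → (Dual ℝ h × h) → (Dual ℝ h × h))
    (hdef : ∀ u v w : Dual ℝ h × h,
      cotangentForm (p u v) w = - cotangentForm v (cotangentBracket mul u w)) :
    ∀ (α β : Dual ℝ h) (x y : h),
      p (α, x) (β, y)
        = (-(mul x - mul.flip x).dualMap β + (mul.flip y).dualMap α, mul x y) := by
  intro α β x y
  exact eq_of_cotangentForm_left_eq fun w => by
    rw [hdef, ← cotangentForm_cotangentProduct mul (α, x) (β, y) w]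
    rfl

/-- The left-symmetric product `⊙` associated with the symplectic
cotangent Lie algebra `(h* ×_ℓ h, ω)` of a left-symmetric algebra `(h, ·)` is
given by `(α,x) ⊙ (β,y) = (-ad_x^t β + r_y^t α, x·y)`. -/
theorem snla_stmt_11 (h : Type*) [AddCommGroup h] [Module ℝ h]
    [FiniteDimensional ℝ h]
    (mul : h →ₗ[ℝ] h →ₗ[ℝ] h)
    (hls : ∀ x y z : h,
      mul (mul x y) z - mul x (mul y z) = mul (mul y x) z - mul y (mul x z))
    (p : (Dual ℝ h × h) → (Dual ℝ h × h) → (Dual ℝ h × h))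
    (hdef : ∀ u v w : Dual ℝ h × h,
      cotangentForm (p u v) w = - cotangentForm v (cotangentBracket mul u w)) :
    ∀ (α β : Dual ℝ h) (x y : h),
      p (α, x) (β, y)
        = (-(mul x - mul.flip x).dualMap β + (mul.flip y).dualMap α, mul x y) :=
  snla_stmt_11_general h mul p hdef
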